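/- arXiv:2202.13888 — 4 statements merged into one kernel-verified Lean document; each statement's English description precedes it below -/
import Mathlib

section
/- The Lagrangian leapfrog integrator is self-adjoint: let (q̃, ṽ) = Φ_ε(q, v) be the result of one Lagrangian leapfrog step of size ε from (q, v), computed via intermediate velocity v̆, and assume the four matrices Id + Ω(ε,q,v), Id + Ω(ε,q̃,v̆), Id − Ω(ε,q̃,ṽ), and Id − Ω(ε,q,v̆) are invertible. Then one Lagrangian leapfrog step of size −ε from (q̃, ṽ) returns exactly (q, v); that is, Φ_{−ε}(Φ_ε(q,v)) = (q,v). -/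
open Matrix

/-- The Christoffel symbols `Γ^k_{ij}(q)` of the metric `G`. -/
noncomputable def christoffel (m : ℕ) (G : (Fin m → ℝ) → Matrix (Fin m) (Fin m) ℝ)
    (k i j : Fin m) (q : Fin m → ℝ) : ℝ :=
  (1 / 2) * ∑ l, (G q)⁻¹ k l *
    (fderiv ℝ (fun x => G x l j) q (Pi.single i 1)
      + fderiv ℝ (fun x => G x l i) q (Pi.single j 1)
      - fderiv ℝ (fun x => G x i j) q (Pi.single l 1))

/-- The matrix `Ω(ε, q, v)` with entries `Ω_{ij} = (ε/2) Σ_k Γ^i_{kj}(q) v^{(k)}`. -/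
noncomputable def Omega (m : ℕ) (G : (Fin m → ℝ) → Matrix (Fin m) (Fin m) ℝ)
    (ε : ℝ) (q v : Fin m → ℝ) : Matrix (Fin m) (Fin m) ℝ :=
  Matrix.of fun i j => (ε / 2) * ∑ k, christoffel m G i k j q * v k


/-- The coordinate gradient `∇U(q)`, with `(∇U(q))_l = ∂U/∂q^{(l)}(q)`. -/
noncomputable def gradU (m : ℕ) (U : (Fin m → ℝ) → ℝ) (q : Fin m → ℝ) : Fin m → ℝ :=
  fun l => fderiv ℝ U q (Pi.single l 1)

/-- One step of the Lagrangian leapfrog integrator with step-size `ε`. -/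
noncomputable def lagrangianLeapfrog (m : ℕ)
    (G : (Fin m → ℝ) → Matrix (Fin m) (Fin m) ℝ) (U : (Fin m → ℝ) → ℝ)
    (ε : ℝ) (x : (Fin m → ℝ) × (Fin m → ℝ)) : (Fin m → ℝ) × (Fin m → ℝ) :=
  let q := x.1
  let v := x.2
  let vb := ((1 : Matrix (Fin m) (Fin m) ℝ) + Omega m G ε q v)⁻¹ *ᵥ
    (v - (ε / 2) • ((G q)⁻¹ *ᵥ gradU m U q))
  let qt := q + ε • vb
  let vt := ((1 : Matrix (Fin m) (Fin m) ℝ) + Omega m G ε qt vb)⁻¹ *ᵥ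
    (vb - (ε / 2) • ((G qt)⁻¹ *ᵥ gradU m U qt))
  (qt, vt)

lemma christoffel_symm (m : ℕ) (G : (Fin m → ℝ) → Matrix (Fin m) (Fin m) ℝ)
    (hsymm : ∀ x a b, G x a b = G x b a) (a b c : Fin m) (q : Fin m → ℝ) :
    christoffel m G a b c q = christoffel m G a c b q := by
  unfold christoffel
  congr 1
  apply Finset.sum_congr rfl
  intro l _
  have h : (fun x => G x b c) = (fun x => G x c b) := funext fun x => hsymm x b c
  rw [h]
  ring

lemma Omega_mulVec_symm (m : ℕ) (G : (Fin m → ℝ) → Matrix (Fin m) (Fin m) ℝ)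
    (hsymm : ∀ x a b, G x a b = G x b a) (ε : ℝ) (p a b : Fin m → ℝ) :
    Omega m G ε p a *ᵥ b = Omega m G ε p b *ᵥ a := by
  funext i
  simp only [Omega, mulVec, dotProduct, of_apply, Finset.sum_mul, Finset.mul_sum]
  rw [Finset.sum_comm]
  apply Finset.sum_congr rfl
  intro j _
  apply Finset.sum_congr rfl
  intro k _
  rw [christoffel_symm m G hsymm i k j]
  ring

lemma Omega_neg (m : ℕ) (G : (Fin m → ℝ) → Matrix (Fin m) (Fin m) ℝ)
    (ε : ℝ) (p a : Fin m → ℝ) :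
    Omega m G (-ε) p a = - Omega m G ε p a := by
  ext i j
  simp [Omega, neg_div, neg_mul]

/-- the Lagrangian leapfrog integrator is self-adjoint:
`Φ_{−ε}(Φ_ε(q,v)) = (q,v)` whenever the four relevant matrices are invertible. -/
theorem lagrangianLeapfrog_self_adjoint
    (m : ℕ) (hm : 1 ≤ m)
    (G : (Fin m → ℝ) → Matrix (Fin m) (Fin m) ℝ)
    (hGsmooth : ∀ i j, ContDiff ℝ (⊤ : ℕ∞) fun q => G q i j)
    (hGpd : ∀ q, (G q).PosDef)
    (U : (Fin m → ℝ) → ℝ) (hU : ContDiff ℝ (⊤ : ℕ∞) U)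
    (ε : ℝ) (q v vb qt vt : Fin m → ℝ)
    (hvb : vb = ((1 : Matrix (Fin m) (Fin m) ℝ) + Omega m G ε q v)⁻¹ *ᵥ
      (v - (ε / 2) • ((G q)⁻¹ *ᵥ gradU m U q)))
    (hqt : qt = q + ε • vb)
    (hvt : vt = ((1 : Matrix (Fin m) (Fin m) ℝ) + Omega m G ε qt vb)⁻¹ *ᵥ
      (vb - (ε / 2) • ((G qt)⁻¹ *ᵥ gradU m U qt)))
    (h1 : IsUnit ((1 : Matrix (Fin m) (Fin m) ℝ) + Omega m G ε q v).det)
    (h2 : IsUnit ((1 : Matrix (Fin m) (Fin m) ℝ) + Omega m G ε qt vb).det)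
    (h3 : IsUnit ((1 : Matrix (Fin m) (Fin m) ℝ) - Omega m G ε qt vt).det)
    (h4 : IsUnit ((1 : Matrix (Fin m) (Fin m) ℝ) - Omega m G ε q vb).det) :
    lagrangianLeapfrog m G U (-ε) (qt, vt) = (q, v) := by
  have hsymm : ∀ x a b, G x a b = G x b a := by
    intro x a b
    have := (hGpd x).isHermitian.apply a b
    simpa using this.symm
  set c1 := (ε / 2) • ((G q)⁻¹ *ᵥ gradU m U q) with hc1
  set c2 := (ε / 2) • ((G qt)⁻¹ *ᵥ gradU m U qt) with hc2
  have e1 : ((1 : Matrix (Fin m) (Fin m) ℝ) + Omega m G ε q v) *ᵥ vb = v - c1 := by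
    rw [hvb, mulVec_mulVec, mul_nonsing_inv _ h1, one_mulVec]
  have e2 : ((1 : Matrix (Fin m) (Fin m) ℝ) + Omega m G ε qt vb) *ᵥ vt = vb - c2 := by
    rw [hvt, mulVec_mulVec, mul_nonsing_inv _ h2, one_mulVec]
  have o2 : Omega m G ε qt vb *ᵥ vt = vb - c2 - vt := by
    have := e2
    rw [add_mulVec, one_mulVec] at this
    linear_combination (norm := module) this
  have o1 : Omega m G ε q v *ᵥ vb = v - c1 - vb := by
    have := e1
    rw [add_mulVec, one_mulVec] at this
    linear_combination (norm := module) this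
  have key2 : ((1 : Matrix (Fin m) (Fin m) ℝ) - Omega m G ε qt vt) *ᵥ vb = vt + c2 := by
    rw [sub_mulVec, one_mulVec, Omega_mulVec_symm m G hsymm, o2]
    module
  have key1 : ((1 : Matrix (Fin m) (Fin m) ℝ) - Omega m G ε q vb) *ᵥ v = vb + c1 := by
    rw [sub_mulVec, one_mulVec, Omega_mulVec_symm m G hsymm, o1]
    module
  have hvb' : ((1 : Matrix (Fin m) (Fin m) ℝ) - Omega m G ε qt vt)⁻¹ *ᵥ (vt + c2) = vb := by
    rw [← key2, mulVec_mulVec, nonsing_inv_mul _ h3, one_mulVec]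
  have hv' : ((1 : Matrix (Fin m) (Fin m) ℝ) - Omega m G ε q vb)⁻¹ *ᵥ (vb + c1) = v := by
    rw [← key1, mulVec_mulVec, nonsing_inv_mul _ h4, one_mulVec]
  simp only [lagrangianLeapfrog, Omega_neg, neg_div, neg_smul, sub_neg_eq_add,
    ← sub_eq_add_neg]
  rw [hvb']
  have hq : qt - ε • vb = q := by rw [hqt]; module
  rw [hq, hv']
end

section
/- The Lagrangian leapfrog integrator has at least first-order accuracy (second-order local error): let (q_t, v_t) be the solution of the Lagrangian equations of motion with initial condition (q_0, v_0), and let Φ_ε denote one Lagrangian leapfrog step of size ε. Then ‖Φ_ε(q_0, v_0) − (q_ε, v_ε)‖ = O(ε²) as ε → 0. -/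
open Matrix

section Helpers

open Asymptotics Filter

variable {E : Type*} [NormedAddCommGroup E] [NormedSpace ℝ E]

lemma isBigO_sq_of_contDiffAt {f : ℝ → E} (hf : ContDiffAt ℝ 2 f 0) (h0 : f 0 = 0)
    (h1 : deriv f 0 = 0) :
    f =O[nhds 0] fun ε : ℝ => ε ^ 2 := by
  obtain ⟨u, hu, hfu⟩ := hf.contDiffOn (le_rfl) (by simp)
  obtain ⟨r, hr, hru⟩ := Metric.mem_nhds_iff.mp hu
  have hball : ContDiffOn ℝ 2 f (Metric.ball 0 r) := hfu.mono hru
  have hdiff : ∀ x ∈ Metric.ball (0:ℝ) r, DifferentiableAt ℝ f x := fun x hx =>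
    (hball.differentiableOn (by norm_num)).differentiableAt (Metric.isOpen_ball.mem_nhds hx)
  have hd1 : ContDiffOn ℝ 1 (deriv f) (Metric.ball 0 r) :=
    hball.deriv_of_isOpen Metric.isOpen_ball (by norm_num)
  have hd0 : DifferentiableAt ℝ (deriv f) 0 :=
    (hd1.differentiableOn (by norm_num)).differentiableAt
      (Metric.isOpen_ball.mem_nhds (by simpa using hr))
  have hO : (fun x => deriv f x) =O[nhds 0] fun x : ℝ => x := by
    have := hd0.isBigO_sub
    simpa [h1] using this
  obtain ⟨K, hK, hKev⟩ := hO.exists_pos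
  rw [IsBigOWith, Filter.eventually_iff_exists_mem] at hKev
  obtain ⟨s, hs, hsK⟩ := hKev
  obtain ⟨r', hr', hr's⟩ := Metric.mem_nhds_iff.mp hs
  set ρ := min r r' with hρ
  have hρpos : 0 < ρ := lt_min hr hr'
  rw [isBigO_iff]
  use K
  rw [Filter.eventually_iff_exists_mem]
  refine ⟨Metric.ball 0 ρ, Metric.ball_mem_nhds _ hρpos, fun ε hε => ?_⟩
  have hεballr : Metric.closedBall (0:ℝ) |ε| ⊆ Metric.ball 0 ρ := by
    intro x hx
    simp only [Metric.mem_closedBall, Metric.mem_ball, Real.dist_eq, sub_zero] at *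
    exact lt_of_le_of_lt hx hε
  have key : ‖f ε - f 0‖ ≤ (K * |ε|) * ‖ε - 0‖ := by
    have harg1 : ∀ x ∈ Metric.closedBall (0:ℝ) |ε|,
        HasDerivWithinAt f (deriv f x) (Metric.closedBall (0:ℝ) |ε|) x := fun x hx =>
      ((hdiff x (Metric.ball_subset_ball (min_le_left r r') (hεballr hx))).hasDerivAt).hasDerivWithinAt
    have harg2 : ∀ x ∈ Metric.closedBall (0:ℝ) |ε|, ‖deriv f x‖ ≤ K * |ε| := by
      intro x hx
      have hxs : x ∈ s := hr's (Metric.ball_subset_ball (min_le_right r r') (hεballr hx))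
      have h2 := hsK x hxs
      have hxε : |x| ≤ |ε| := by
        simpa [Real.dist_eq] using hx
      calc ‖deriv f x‖ ≤ K * ‖x‖ := h2
        _ ≤ K * |ε| := by
            rw [Real.norm_eq_abs]; nlinarith [abs_nonneg x]
    exact (convex_closedBall (0:ℝ) |ε|).norm_image_sub_le_of_norm_hasDerivWithin_le harg1 harg2
      (by simp) (by simp [Metric.mem_closedBall, Real.dist_eq])
  rw [h0, sub_zero] at key
  calc ‖f ε‖ ≤ (K * |ε|) * ‖ε - 0‖ := key
    _ = K * ‖ε ^ 2‖ := by
        rw [sub_zero]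
        simp only [Real.norm_eq_abs, abs_pow, sq_abs]
        rw [← sq_abs]
        ring

lemma contDiffAt_finset_prod {ι : Type*} [DecidableEq ι] {f : ι → E → ℝ} {x : E} (s : Finset ι)
    (h : ∀ i ∈ s, ContDiffAt ℝ (⊤ : ℕ∞) (f i) x) :
    ContDiffAt ℝ (⊤ : ℕ∞) (fun y => ∏ i ∈ s, f i y) x := by
  classical
  induction s using Finset.induction with
  | empty => simpa using contDiffAt_const
  | insert a t hns ih =>
    simp only [Finset.prod_insert hns]
    exact (h a (Finset.mem_insert_self a t)).mul
      (ih fun i hi => h i (Finset.mem_insert_of_mem hi))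

lemma contDiffAt_det_comp {m : ℕ} {f : E → Matrix (Fin m) (Fin m) ℝ} {x : E}
    (h : ∀ i j, ContDiffAt ℝ (⊤ : ℕ∞) (fun y => f y i j) x) :
    ContDiffAt ℝ (⊤ : ℕ∞) (fun y => (f y).det) x := by
  simp only [Matrix.det_apply]
  apply ContDiffAt.sum
  intro σ _
  have hp : ContDiffAt ℝ (⊤ : ℕ∞) (fun y => ∏ i, f y (σ i) i) x :=
    contDiffAt_finset_prod _ fun i _ => h (σ i) i
  have : (fun y => Equiv.Perm.sign σ • ∏ i, f y (σ i) i)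
      = fun y => ((Equiv.Perm.sign σ : ℤ) : ℝ) * ∏ i, f y (σ i) i := by
    funext y; simp [Units.smul_def, zsmul_eq_mul]
  rw [this]
  exact contDiffAt_const.mul hp

lemma contDiffAt_inv_entry {m : ℕ} {f : E → Matrix (Fin m) (Fin m) ℝ} {x : E}
    (h : ∀ i j, ContDiffAt ℝ (⊤ : ℕ∞) (fun y => f y i j) x) (hdet : (f x).det ≠ 0) (i j : Fin m) :
    ContDiffAt ℝ (⊤ : ℕ∞) (fun y => (f y)⁻¹ i j) x := by
  have hinv : ∀ y, (f y)⁻¹ i j = (f y).det⁻¹ * (f y).adjugate i j := by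
    intro y
    rw [Matrix.inv_def, Matrix.smul_apply, Ring.inverse_eq_inv', smul_eq_mul]
  simp only [hinv]
  have hadj : ContDiffAt ℝ (⊤ : ℕ∞) (fun y => (f y).adjugate i j) x := by
    simp only [Matrix.adjugate_apply]
    apply contDiffAt_det_comp
    intro a b
    simp only [Matrix.updateRow_apply]
    by_cases hab : a = j
    · simp only [hab, if_true]
      exact contDiffAt_const
    · simp only [hab, if_false]
      exact h a b
  exact ((contDiffAt_det_comp h).inv hdet).mul hadj

open Filter in
lemma deriv_inv_mulVec {m : ℕ} (A : ℝ → Matrix (Fin m) (Fin m) ℝ) (w : ℝ → Fin m → ℝ)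
    (A' : Matrix (Fin m) (Fin m) ℝ) (w' du : Fin m → ℝ)
    (hA : ∀ i j, HasDerivAt (fun ε => A ε i j) (A' i j) 0)
    (hA0 : A 0 = 1)
    (hcont : ContinuousAt (fun ε => (A ε).det) 0)
    (hw : ∀ k, HasDerivAt (fun ε => w ε k) (w' k) 0)
    (hu : ∀ k, HasDerivAt (fun ε => ((A ε)⁻¹ *ᵥ w ε) k) (du k) 0)
    (i : Fin m) :
    du i = w' i - (A' *ᵥ w 0) i := by
  have hu0 : (fun k => ((A 0)⁻¹ *ᵥ w 0) k) = w 0 := by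
    funext k; rw [hA0, inv_one, Matrix.one_mulVec]
  have hdet : ∀ᶠ ε in nhds 0, (A ε).det ≠ 0 := by
    apply hcont.eventually_ne
    rw [hA0, Matrix.det_one]; norm_num
  have hev : (fun ε => ∑ j, A ε i j * ((A ε)⁻¹ *ᵥ w ε) j) =ᶠ[nhds 0] fun ε => w ε i := by
    filter_upwards [hdet] with ε hε
    have h1 : A ε * (A ε)⁻¹ = 1 := Matrix.mul_nonsing_inv _ (isUnit_iff_ne_zero.mpr hε)
    have h2 : (A ε *ᵥ ((A ε)⁻¹ *ᵥ w ε)) i = w ε i := by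
      rw [Matrix.mulVec_mulVec, h1, Matrix.one_mulVec]
    rw [← h2]
    simp [Matrix.mulVec, dotProduct]
  have hL : HasDerivAt (fun ε => ∑ j, A ε i j * ((A ε)⁻¹ *ᵥ w ε) j)
      (∑ j, (A' i j * ((A 0)⁻¹ *ᵥ w 0) j + A 0 i j * du j)) 0 :=
    HasDerivAt.fun_sum fun j _ => (hA i j).mul (hu j)
  have hR : HasDerivAt (fun ε => ∑ j, A ε i j * ((A ε)⁻¹ *ᵥ w ε) j) (w' i) 0 :=
    (hev.hasDerivAt_iff).mpr (hw i)
  have heq := hL.unique hR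
  have hsimp : ∑ j, (A' i j * ((A 0)⁻¹ *ᵥ w 0) j + A 0 i j * du j)
      = (A' *ᵥ w 0) i + du i := by
    rw [Finset.sum_add_distrib]
    congr 1
    · have h3 : ((A 0)⁻¹ *ᵥ w 0) = w 0 := hu0
      rw [h3]
      simp only [Matrix.mulVec, dotProduct]
    · rw [hA0]
      simp [Matrix.one_apply]
  rw [hsimp] at heq
  linarith

lemma gradU_contDiff {m : ℕ} {U : (Fin m → ℝ) → ℝ} (hU : ContDiff ℝ (⊤ : ℕ∞) U) (l : Fin m) :
    ContDiff ℝ (⊤ : ℕ∞) (fun x => gradU m U x l) :=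
  (hU.fderiv_right (by simp)).clm_apply contDiff_const

lemma Ginv_contDiffAt {m : ℕ} {G : (Fin m → ℝ) → Matrix (Fin m) (Fin m) ℝ}
    (hGsmooth : ∀ i j, ContDiff ℝ (⊤ : ℕ∞) fun q => G q i j)
    (hGpd : ∀ q, (G q).PosDef) (x : Fin m → ℝ) (i j : Fin m) :
    ContDiffAt ℝ (⊤ : ℕ∞) (fun y => (G y)⁻¹ i j) x :=
  contDiffAt_inv_entry (fun i j => (hGsmooth i j).contDiffAt) (hGpd x).det_pos.ne' i j

lemma christoffel_contDiffAt {m : ℕ} {G : (Fin m → ℝ) → Matrix (Fin m) (Fin m) ℝ}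
    (hGsmooth : ∀ i j, ContDiff ℝ (⊤ : ℕ∞) fun q => G q i j)
    (hGpd : ∀ q, (G q).PosDef) (k i j : Fin m) (x : Fin m → ℝ) :
    ContDiffAt ℝ (⊤ : ℕ∞) (christoffel m G k i j) x := by
  have hfd : ∀ (a b : Fin m) (c : Fin m), ContDiffAt ℝ (⊤ : ℕ∞)
      (fun y => fderiv ℝ (fun x => G x a b) y (Pi.single c 1)) x :=
    fun a b c => (((hGsmooth a b).fderiv_right (by simp)).clm_apply contDiff_const).contDiffAt
  unfold christoffel
  apply ContDiffAt.mul contDiffAt_const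
  apply ContDiffAt.sum
  intro l _
  exact (Ginv_contDiffAt hGsmooth hGpd x k l).mul
    (((hfd l j i).add (hfd l i j)).sub (hfd i j l))

end Helpers

open Asymptotics Filter in
/-- the Lagrangian leapfrog integrator has at least first-order accuracy
(second-order local error): `‖Φ_ε(q_0, v_0) − (q_ε, v_ε)‖ = O(ε²)` as `ε → 0`. -/
theorem lagrangianLeapfrog_first_order
    (m : ℕ) (hm : 1 ≤ m)
    (G : (Fin m → ℝ) → Matrix (Fin m) (Fin m) ℝ)
    (hGsmooth : ∀ i j, ContDiff ℝ (⊤ : ℕ∞) fun q => G q i j)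
    (hGpd : ∀ q, (G q).PosDef)
    (U : (Fin m → ℝ) → ℝ) (hU : ContDiff ℝ (⊤ : ℕ∞) U)
    (q v : ℝ → (Fin m → ℝ)) (δ : ℝ) (hδ : 0 < δ)
    (hsol : ContDiffOn ℝ (⊤ : ℕ∞) (fun t => (q t, v t)) (Set.Ioo (-δ) δ))
    (hq : ∀ t ∈ Set.Ioo (-δ) δ, HasDerivAt q (v t) t)
    (hv : ∀ t ∈ Set.Ioo (-δ) δ, ∀ k : Fin m,
      HasDerivAt (fun s => v s k)
        (-(∑ i, ∑ j, christoffel m G k i j (q t) * v t i * v t j)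
          - ∑ l, (G (q t))⁻¹ k l * fderiv ℝ U (q t) (Pi.single l 1)) t) :
    (fun ε : ℝ => lagrangianLeapfrog m G U ε (q 0, v 0) - (q ε, v ε))
      =O[nhds 0] fun ε : ℝ => ε ^ 2 := by
  have h0mem : (0:ℝ) ∈ Set.Ioo (-δ) δ := ⟨by linarith, hδ⟩
  set q0 : Fin m → ℝ := q 0 with hq0def
  set v0 : Fin m → ℝ := v 0 with hv0def
  set M : Matrix (Fin m) (Fin m) ℝ :=
    Matrix.of fun i j => ∑ k, christoffel m G i k j q0 * v0 k with hMdef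
  set g : Fin m → ℝ := (G q0)⁻¹ *ᵥ gradU m U q0 with hgdef
  set A : ℝ → Matrix (Fin m) (Fin m) ℝ := fun ε => 1 + Omega m G ε q0 v0 with hAdef
  set w : ℝ → Fin m → ℝ := fun ε => v0 - (ε/2) • ((G q0)⁻¹ *ᵥ gradU m U q0) with hwdef
  set vb : ℝ → Fin m → ℝ := fun ε => (A ε)⁻¹ *ᵥ w ε with hvbdef
  set qt : ℝ → Fin m → ℝ := fun ε => q0 + ε • vb ε with hqtdef
  set B : ℝ → Matrix (Fin m) (Fin m) ℝ := fun ε => 1 + Omega m G ε (qt ε) (vb ε) with hBdef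
  set w2 : ℝ → Fin m → ℝ :=
    fun ε => vb ε - (ε/2) • ((G (qt ε))⁻¹ *ᵥ gradU m U (qt ε)) with hw2def
  set vt : ℝ → Fin m → ℝ := fun ε => (B ε)⁻¹ *ᵥ w2 ε with hvtdef
  have hleap : ∀ ε, lagrangianLeapfrog m G U ε (q 0, v 0) = (qt ε, vt ε) := fun ε => rfl
  -- entries of A
  have hAentry : ∀ i j, (fun ε => A ε i j)
      = fun ε => (1 : Matrix (Fin m) (Fin m) ℝ) i j + ε/2 * M i j := by
    intro i j
    funext ε
    simp [hAdef, Omega, hMdef, Matrix.add_apply]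
  have hAsmooth : ∀ i j, ContDiffAt ℝ (⊤ : ℕ∞) (fun ε => A ε i j) 0 := by
    intro i j
    rw [hAentry i j]
    exact (contDiffAt_const.add ((contDiffAt_id.div_const 2).mul contDiffAt_const))
  have hAderiv : ∀ i j, HasDerivAt (fun ε => A ε i j) ((1/2) * M i j) 0 := by
    intro i j
    rw [hAentry i j]
    have h := (hasDerivAt_const (0:ℝ) ((1 : Matrix (Fin m) (Fin m) ℝ) i j)).add
      (((hasDerivAt_id (0:ℝ)).div_const 2).mul_const (M i j))
    refine h.congr_deriv ?_
    ring
  have hA0 : A 0 = 1 := by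
    ext i j
    simp [hAdef, Omega]
  have hdetA : ContDiffAt ℝ (⊤ : ℕ∞) (fun ε => (A ε).det) 0 := contDiffAt_det_comp hAsmooth
  have hdetA0 : (A 0).det ≠ 0 := by rw [hA0, Matrix.det_one]; norm_num
  -- entries of w
  have hwentry : ∀ k, (fun ε => w ε k) = fun ε => v0 k - ε/2 * g k := by
    intro k; funext ε; simp [hwdef, hgdef]
  have hwsmooth : ∀ k, ContDiffAt ℝ (⊤ : ℕ∞) (fun ε => w ε k) 0 := by
    intro k
    rw [hwentry k]
    exact contDiffAt_const.sub ((contDiffAt_id.div_const 2).mul contDiffAt_const)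
  have hwderiv : ∀ k, HasDerivAt (fun ε => w ε k) (-(1/2) * g k) 0 := by
    intro k
    rw [hwentry k]
    have h := (hasDerivAt_const (0:ℝ) (v0 k)).sub
      (((hasDerivAt_id (0:ℝ)).div_const 2).mul_const (g k))
    refine h.congr_deriv ?_
    ring
  have hw0 : w 0 = v0 := by funext k; simp [hwdef]
  -- vb
  have hvbC : ∀ k, ContDiffAt ℝ (⊤ : ℕ∞) (fun ε => vb ε k) 0 := by
    intro k
    have : (fun ε => vb ε k) = fun ε => ∑ j, (A ε)⁻¹ k j * w ε j := by
      funext ε; simp [hvbdef, Matrix.mulVec, dotProduct]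
    rw [this]
    exact ContDiffAt.sum fun j _ =>
      (contDiffAt_inv_entry hAsmooth hdetA0 k j).mul (hwsmooth j)
  set dvb : Fin m → ℝ := fun k => deriv (fun ε => vb ε k) 0 with hdvbdef
  have hdvb : ∀ k, HasDerivAt (fun ε => vb ε k) (dvb k) 0 := fun k =>
    ((hvbC k).differentiableAt (by simp)).hasDerivAt
  have hvb0 : vb 0 = v0 := by
    rw [hvbdef]
    simp only [hA0, inv_one, Matrix.one_mulVec, hw0]
  have hdvb_eq : ∀ i, dvb i = -(1/2) * g i - (1/2) * (M *ᵥ v0) i := by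
    intro i
    have key := deriv_inv_mulVec A w ((1/2 : ℝ) • M) (fun k => -(1/2) * g k) dvb
      (fun i j => by simpa [Matrix.smul_apply, smul_eq_mul] using hAderiv i j)
      hA0 hdetA.continuousAt hwderiv hdvb i
    rw [key, hw0, Matrix.smul_mulVec]
    simp only [Pi.smul_apply, smul_eq_mul]
    try ring
  -- qt
  have hqtC : ∀ k, ContDiffAt ℝ (⊤ : ℕ∞) (fun ε => qt ε k) 0 := by
    intro k
    have : (fun ε => qt ε k) = fun ε => q0 k + ε * vb ε k := by
      funext ε; simp [hqtdef]
    rw [this]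
    exact contDiffAt_const.add (contDiffAt_id.mul (hvbC k))
  have hqtderiv : ∀ k, HasDerivAt (fun ε => qt ε k) (v0 k) 0 := by
    intro k
    have heq : (fun ε => qt ε k) = fun ε => q0 k + ε * vb ε k := by
      funext ε; simp [hqtdef]
    rw [heq]
    have h := (hasDerivAt_const (0:ℝ) (q0 k)).add ((hasDerivAt_id (0:ℝ)).mul (hdvb k))
    refine h.congr_deriv ?_
    rw [hvb0]
    simp
  have hqt0 : qt 0 = q0 := by funext k; simp [hqtdef]
  have hqtpi : ContDiffAt ℝ (⊤ : ℕ∞) qt 0 := contDiffAt_pi.mpr hqtC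
  -- B
  have hSsmooth : ∀ i j, ContDiffAt ℝ (⊤ : ℕ∞)
      (fun ε => ∑ k, christoffel m G i k j (qt ε) * vb ε k) 0 := by
    intro i j
    exact ContDiffAt.sum fun k _ =>
      (((christoffel_contDiffAt hGsmooth hGpd i k j (qt 0)).comp 0 hqtpi).mul (hvbC k))
  have hS0 : ∀ i j, (∑ k, christoffel m G i k j (qt 0) * vb 0 k) = M i j := by
    intro i j
    rw [hqt0, hvb0]
    simp [hMdef]
  have hBentry : ∀ i j, (fun ε => B ε i j) = fun ε => (1 : Matrix (Fin m) (Fin m) ℝ) i j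
      + ε/2 * ∑ k, christoffel m G i k j (qt ε) * vb ε k := by
    intro i j; funext ε; simp [hBdef, Omega, Matrix.add_apply]
  have hBsmooth : ∀ i j, ContDiffAt ℝ (⊤ : ℕ∞) (fun ε => B ε i j) 0 := by
    intro i j
    rw [hBentry i j]
    exact contDiffAt_const.add ((contDiffAt_id.div_const 2).mul (hSsmooth i j))
  have hBderiv : ∀ i j, HasDerivAt (fun ε => B ε i j) ((1/2) * M i j) 0 := by
    intro i j
    rw [hBentry i j]
    have hSd : HasDerivAt (fun ε => ∑ k, christoffel m G i k j (qt ε) * vb ε k)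
        (deriv (fun ε => ∑ k, christoffel m G i k j (qt ε) * vb ε k) 0) 0 :=
      ((hSsmooth i j).differentiableAt (by simp)).hasDerivAt
    have h := (hasDerivAt_const (0:ℝ) ((1 : Matrix (Fin m) (Fin m) ℝ) i j)).add
      (((hasDerivAt_id (0:ℝ)).div_const 2).mul hSd)
    refine h.congr_deriv ?_
    rw [hS0 i j]
    simp
    try ring
  have hB0 : B 0 = 1 := by
    ext i j
    simp [hBdef, Omega]
  have hdetB : ContDiffAt ℝ (⊤ : ℕ∞) (fun ε => (B ε).det) 0 := contDiffAt_det_comp hBsmooth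
  have hdetB0 : (B 0).det ≠ 0 := by rw [hB0, Matrix.det_one]; norm_num
  -- w2
  have hhC : ∀ k, ContDiffAt ℝ (⊤ : ℕ∞)
      (fun ε => ((G (qt ε))⁻¹ *ᵥ gradU m U (qt ε)) k) 0 := by
    intro k
    have : (fun ε => ((G (qt ε))⁻¹ *ᵥ gradU m U (qt ε)) k)
        = fun ε => ∑ l, (G (qt ε))⁻¹ k l * gradU m U (qt ε) l := by
      funext ε; simp [Matrix.mulVec, dotProduct]
    rw [this]
    exact ContDiffAt.sum fun l _ =>
      ((Ginv_contDiffAt hGsmooth hGpd (qt 0) k l).comp 0 hqtpi).mul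
        (((gradU_contDiff hU l).contDiffAt).comp 0 hqtpi)
  have hh0 : ((G (qt 0))⁻¹ *ᵥ gradU m U (qt 0)) = g := by rw [hqt0, hgdef]
  have hw2C : ∀ k, ContDiffAt ℝ (⊤ : ℕ∞) (fun ε => w2 ε k) 0 := by
    intro k
    have : (fun ε => w2 ε k) = fun ε => vb ε k
        - ε/2 * ((G (qt ε))⁻¹ *ᵥ gradU m U (qt ε)) k := by
      funext ε; simp [hw2def]
    rw [this]
    exact (hvbC k).sub ((contDiffAt_id.div_const 2).mul (hhC k))
  have hw2deriv : ∀ k, HasDerivAt (fun ε => w2 ε k) (dvb k - (1/2) * g k) 0 := by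
    intro k
    have heq : (fun ε => w2 ε k) = fun ε => vb ε k
        - ε/2 * ((G (qt ε))⁻¹ *ᵥ gradU m U (qt ε)) k := by
      funext ε; simp [hw2def]
    rw [heq]
    have hhd : HasDerivAt (fun ε => ((G (qt ε))⁻¹ *ᵥ gradU m U (qt ε)) k)
        (deriv (fun ε => ((G (qt ε))⁻¹ *ᵥ gradU m U (qt ε)) k) 0) 0 :=
      ((hhC k).differentiableAt (by simp)).hasDerivAt
    have h := (hdvb k).sub (((hasDerivAt_id (0:ℝ)).div_const 2).mul hhd)
    refine h.congr_deriv ?_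
    have : ((G (qt 0))⁻¹ *ᵥ gradU m U (qt 0)) k = g k := by rw [hh0]
    rw [this]
    simp
    try ring
  have hw20 : w2 0 = v0 := by
    funext k
    simp [hw2def, hvb0]
  -- vt
  have hvtC : ∀ k, ContDiffAt ℝ (⊤ : ℕ∞) (fun ε => vt ε k) 0 := by
    intro k
    have : (fun ε => vt ε k) = fun ε => ∑ j, (B ε)⁻¹ k j * w2 ε j := by
      funext ε; simp [hvtdef, Matrix.mulVec, dotProduct]
    rw [this]
    exact ContDiffAt.sum fun j _ =>
      (contDiffAt_inv_entry hBsmooth hdetB0 k j).mul (hw2C j)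
  set dvt : Fin m → ℝ := fun k => deriv (fun ε => vt ε k) 0 with hdvtdef
  have hdvt : ∀ k, HasDerivAt (fun ε => vt ε k) (dvt k) 0 := fun k =>
    ((hvtC k).differentiableAt (by simp)).hasDerivAt
  have hvt0 : vt 0 = v0 := by
    rw [hvtdef]
    simp only [hB0, inv_one, Matrix.one_mulVec, hw20]
  have hdvt_eq : ∀ i, dvt i = -((M *ᵥ v0) i) - g i := by
    intro i
    have key := deriv_inv_mulVec B w2 ((1/2 : ℝ) • M) (fun k => dvb k - (1/2) * g k) dvt
      (fun i j => by simpa [Matrix.smul_apply, smul_eq_mul] using hBderiv i j)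
      hB0 hdetB.continuousAt hw2deriv hdvt i
    rw [key, hw20, Matrix.smul_mulVec]
    simp only [Pi.smul_apply, smul_eq_mul]
    rw [hdvb_eq i]
    ring
  -- solution side
  have hsolAt : ContDiffAt ℝ (⊤ : ℕ∞) (fun t => (q t, v t)) 0 :=
    hsol.contDiffAt (isOpen_Ioo.mem_nhds h0mem)
  have hqC : ContDiffAt ℝ (⊤ : ℕ∞) q 0 := by
    have := contDiff_fst.contDiffAt.comp (0:ℝ) hsolAt
    exact this
  have hvC : ContDiffAt ℝ (⊤ : ℕ∞) v 0 := by
    have := contDiff_snd.contDiffAt.comp (0:ℝ) hsolAt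
    exact this
  have hqd : HasDerivAt q v0 0 := hq 0 h0mem
  have hvd := hv 0 h0mem
  -- target derivative of v matches dvt
  have hmatch : ∀ k, (-(∑ i, ∑ j, christoffel m G k i j (q 0) * v 0 i * v 0 j)
      - ∑ l, (G (q 0))⁻¹ k l * fderiv ℝ U (q 0) (Pi.single l 1)) = dvt k := by
    intro k
    rw [hdvt_eq k]
    have h1 : (M *ᵥ v0) k = ∑ i, ∑ j, christoffel m G k i j q0 * v0 i * v0 j := by
      simp only [Matrix.mulVec, dotProduct, hMdef, Matrix.of_apply, Finset.sum_mul]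
      rw [Finset.sum_comm]
    have h2 : g k = ∑ l, (G q0)⁻¹ k l * fderiv ℝ U q0 (Pi.single l 1) := by
      simp [hgdef, Matrix.mulVec, dotProduct, gradU]
    rw [h1, h2]
    try ring
  -- final function
  have hFeq : (fun ε : ℝ => lagrangianLeapfrog m G U ε (q 0, v 0) - (q ε, v ε))
      = fun ε : ℝ => ((qt ε - q ε, vt ε - v ε) : (Fin m → ℝ) × (Fin m → ℝ)) := by
    funext ε
    rw [hleap ε]
    rfl
  rw [hFeq]
  apply isBigO_sq_of_contDiffAt
  · apply ContDiffAt.prodMk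
    · exact (((contDiffAt_pi.mpr hqtC).sub hqC).of_le (WithTop.coe_le_coe.mpr le_top))
    · exact (((contDiffAt_pi.mpr hvtC).sub hvC).of_le (WithTop.coe_le_coe.mpr le_top))
  · have : qt 0 - q 0 = 0 := by rw [hqt0]; simp [hq0def]
    have h2 : vt 0 - v 0 = 0 := by rw [hvt0]; simp [hv0def]
    simp only [Prod.mk_eq_zero]
    exact ⟨this, h2⟩
  · have hd1 : HasDerivAt (fun ε => qt ε - q ε) (0 : Fin m → ℝ) 0 := by
      apply hasDerivAt_pi.mpr
      intro k
      have h := (hqtderiv k).sub ((hasDerivAt_pi.mp hqd) k)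
      simpa [Pi.sub_def] using h
    have hd2 : HasDerivAt (fun ε => vt ε - v ε) (0 : Fin m → ℝ) 0 := by
      apply hasDerivAt_pi.mpr
      intro k
      have h := (hdvt k).sub (hvd k)
      rw [hmatch k] at h
      simpa [Pi.sub_def] using h
    have hF : HasDerivAt (fun ε : ℝ =>
        ((qt ε - q ε, vt ε - v ε) : (Fin m → ℝ) × (Fin m → ℝ)))
        ((0 : Fin m → ℝ), (0 : Fin m → ℝ)) 0 := hd1.prodMk hd2
    have : ((0 : Fin m → ℝ), (0 : Fin m → ℝ))
        = (0 : (Fin m → ℝ) × (Fin m → ℝ)) := rfl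
    rw [this] at hF
    exact hF.deriv
end

section
/- The inverted Lagrangian leapfrog integrator has at least third-order local error (i.e. it is a second-order accurate method): let (q_t, v_t) be the solution of the Lagrangian equations of motion with initial condition (q_0, v_0), and let Ψ_ε denote one inverted Lagrangian leapfrog step of size ε. Then ‖Ψ_ε(q_0, v_0) − (q_ε, v_ε)‖ = O(ε³) as ε → 0. -/
open Matrix

/-- One step of the inverted Lagrangian leapfrog integrator with step-size `ε`. -/
noncomputable def invertedLagrangianLeapfrog (m : ℕ)
    (G : (Fin m → ℝ) → Matrix (Fin m) (Fin m) ℝ) (U : (Fin m → ℝ) → ℝ)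
    (ε : ℝ) (x : (Fin m → ℝ) × (Fin m → ℝ)) : (Fin m → ℝ) × (Fin m → ℝ) :=
  let q := x.1
  let v := x.2
  let qb := q + (ε / 2) • v
  let vt := ((1 : Matrix (Fin m) (Fin m) ℝ) + 2 • Omega m G ε qb v)⁻¹ *ᵥ
    (v - ε • ((G qb)⁻¹ *ᵥ gradU m U qb))
  let qt := qb + (ε / 2) • vt
  (qt, vt)

open Asymptotics Filter in

open Matrix Filter Asymptotics

variable {E : Type*} [NormedAddCommGroup E] [NormedSpace ℝ E]

lemma contDiff_finset_prod {ι : Type*} {f : ι → E → ℝ} (s : Finset ι)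
    (h : ∀ i ∈ s, ContDiff ℝ (⊤ : ℕ∞) (f i)) :
    ContDiff ℝ (⊤ : ℕ∞) fun x => ∏ i ∈ s, f i x := by
  classical
  induction s using Finset.induction_on with
  | empty => simpa using contDiff_const
  | insert _ _ hni ih =>
    rename_i a s'
    simp only [Finset.prod_insert hni]
    exact (h a (Finset.mem_insert_self a s')).mul
      (ih fun i hi => h i (Finset.mem_insert_of_mem hi))

lemma contDiff_matrix_det {m : ℕ} {f : E → Matrix (Fin m) (Fin m) ℝ}
    (h : ∀ i j, ContDiff ℝ (⊤ : ℕ∞) fun x => f x i j) :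
    ContDiff ℝ (⊤ : ℕ∞) fun x => (f x).det := by
  simp only [Matrix.det_apply']
  exact ContDiff.sum fun σ _ => contDiff_const.mul
    (contDiff_finset_prod _ fun i _ => h (σ i) i)

lemma contDiff_matrix_adjugate {m : ℕ} {f : E → Matrix (Fin m) (Fin m) ℝ}
    (h : ∀ i j, ContDiff ℝ (⊤ : ℕ∞) fun x => f x i j) (k l : Fin m) :
    ContDiff ℝ (⊤ : ℕ∞) fun x => (f x).adjugate k l := by
  simp only [Matrix.adjugate_apply]
  apply contDiff_matrix_det
  intro i j
  rcases eq_or_ne i l with rfl | hne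
  · simp only [Matrix.updateRow_self]
    exact contDiff_const
  · simp only [Matrix.updateRow_ne hne]
    exact h i j

lemma contDiffAt_matrix_inv_entry {m : ℕ} {f : E → Matrix (Fin m) (Fin m) ℝ}
    (h : ∀ i j, ContDiff ℝ (⊤ : ℕ∞) fun x => f x i j) {x₀ : E} (hdet : (f x₀).det ≠ 0) (k l : Fin m) :
    ContDiffAt ℝ (⊤ : ℕ∞) (fun x => (f x)⁻¹ k l) x₀ := by
  have : (fun x => (f x)⁻¹ k l) = fun x => ((f x).det)⁻¹ * (f x).adjugate k l := by
    funext x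
    rw [Matrix.inv_def, Matrix.smul_apply, Ring.inverse_eq_inv', smul_eq_mul]
  rw [this]
  exact (((contDiff_matrix_det h).contDiffAt).inv hdet).mul
    (contDiff_matrix_adjugate h k l).contDiffAt

lemma contDiff_fderiv_apply {f : E → ℝ} (hf : ContDiff ℝ (⊤ : ℕ∞) f) (w : E) :
    ContDiff ℝ (⊤ : ℕ∞) fun x => fderiv ℝ f x w := by
  have h1 : ContDiff ℝ (⊤ : ℕ∞) (fderiv ℝ f) := hf.fderiv_right (by simp)
  exact ((ContinuousLinearMap.apply ℝ ℝ w).contDiff).comp h1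

lemma christoffel_contDiff {m : ℕ} {G : (Fin m → ℝ) → Matrix (Fin m) (Fin m) ℝ}
    (hGsmooth : ∀ i j, ContDiff ℝ (⊤ : ℕ∞) fun q => G q i j)
    (hGdet : ∀ x, (G x).det ≠ 0) (k i j : Fin m) :
    ContDiff ℝ (⊤ : ℕ∞) (christoffel m G k i j) := by
  unfold christoffel
  apply contDiff_const.mul
  apply ContDiff.sum
  intro l _
  have hinv : ContDiff ℝ (⊤ : ℕ∞) fun x => (G x)⁻¹ k l :=
    contDiff_iff_contDiffAt.mpr fun x => contDiffAt_matrix_inv_entry hGsmooth (hGdet x) k l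
  exact hinv.mul (((contDiff_fderiv_apply (hGsmooth l j) _).add
    (contDiff_fderiv_apply (hGsmooth l i) _)).sub (contDiff_fderiv_apply (hGsmooth i j) _))

lemma christoffel_symm_s11 {m : ℕ} {G : (Fin m → ℝ) → Matrix (Fin m) (Fin m) ℝ}
    (hGsymm : ∀ x i j, G x i j = G x j i) (k i j : Fin m) (x : Fin m → ℝ) :
    christoffel m G k i j x = christoffel m G k j i x := by
  unfold christoffel
  congr 1
  apply Finset.sum_congr rfl
  intro l _
  congr 1
  have hij : (fun y => G y i j) = fun y => G y j i := funext fun y => hGsymm y i j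
  rw [hij, add_comm]

open Filter Asymptotics in
lemma isBigO_pow_succ_of_deriv {E : Type*} [NormedAddCommGroup E] [NormedSpace ℝ E]
    {f : ℝ → E} {n : ℕ}
    (hd : ∀ᶠ x in nhds (0:ℝ), DifferentiableAt ℝ f x) (h0 : f 0 = 0)
    (hO : deriv f =O[nhds 0] fun x => x ^ n) :
    f =O[nhds 0] fun x => x ^ (n + 1) := by
  obtain ⟨C, hC0, hC⟩ := hO.exists_nonneg
  have hb := hd.and hC.bound
  rw [Metric.eventually_nhds_iff] at hb
  obtain ⟨r, hr0, hr⟩ := hb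
  have key : ∀ x : ℝ, dist x 0 < r → DifferentiableAt ℝ f x ∧ ‖deriv f x‖ ≤ C * |x| ^ n := by
    intro x hx
    have := hr hx
    simpa [Real.norm_eq_abs, abs_pow] using this
  rw [isBigO_iff]
  refine ⟨C, ?_⟩
  rw [Metric.eventually_nhds_iff]
  refine ⟨r, hr0, ?_⟩
  intro ε hε
  have hεr : |ε| < r := by simpa [Real.dist_eq] using hε
  have habs : ∀ x : ℝ, |x| ≤ |ε| → DifferentiableAt ℝ f x ∧ ‖deriv f x‖ ≤ C * |ε| ^ n := by
    intro x hx
    have hxr : dist x 0 < r := by rw [Real.dist_eq, sub_zero]; exact lt_of_le_of_lt hx hεr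
    refine ⟨(key x hxr).1, le_trans (key x hxr).2 ?_⟩
    exact mul_le_mul_of_nonneg_left (pow_le_pow_left₀ (abs_nonneg x) hx n) hC0
  have goal : ‖f ε‖ ≤ C * |ε| ^ (n + 1) := by
    rcases le_or_gt 0 ε with hpos | hneg
    · have := norm_image_sub_le_of_norm_deriv_le_segment'
        (f := f) (f' := deriv f) (a := 0) (b := ε) (C := C * |ε| ^ n)
        (fun x hx => ((habs x (by rw [abs_of_nonneg hx.1]; exact le_trans hx.2 (le_abs_self ε))).1.hasDerivAt).hasDerivWithinAt)
        (fun x hx => (habs x (by rw [abs_of_nonneg hx.1]; exact le_trans hx.2.le (le_abs_self ε))).2)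
        ε (Set.right_mem_Icc.mpr hpos)
      rw [h0, sub_zero, sub_zero] at this
      calc ‖f ε‖ ≤ C * |ε| ^ n * ε := this
        _ = C * (|ε| ^ n * ε) := by ring
        _ ≤ C * |ε| ^ (n+1) := by
            apply mul_le_mul_of_nonneg_left _ hC0
            rw [pow_succ]
            exact mul_le_mul_of_nonneg_left (le_abs_self ε) (pow_nonneg (abs_nonneg ε) n)
    · have hmem : ∀ x ∈ Set.Icc ε 0, |x| ≤ |ε| := by
        intro x hx
        rw [abs_of_nonpos hx.2, abs_of_nonpos hneg.le]
        exact neg_le_neg hx.1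
      have := norm_image_sub_le_of_norm_deriv_le_segment'
        (f := f) (f' := deriv f) (a := ε) (b := 0) (C := C * |ε| ^ n)
        (fun x hx => ((habs x (hmem x hx)).1.hasDerivAt).hasDerivWithinAt)
        (fun x hx => (habs x (hmem x (Set.Ico_subset_Icc_self hx))).2)
        0 (Set.right_mem_Icc.mpr hneg.le)
      rw [h0, zero_sub, norm_neg, zero_sub] at this
      calc ‖f ε‖ ≤ C * |ε| ^ n * (-ε) := this
        _ = C * (|ε| ^ n * (-ε)) := by ring
        _ ≤ C * |ε| ^ (n+1) := by
            apply mul_le_mul_of_nonneg_left _ hC0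
            rw [pow_succ]
            apply mul_le_mul_of_nonneg_left _ (pow_nonneg (abs_nonneg ε) n)
            rw [abs_of_nonpos hneg.le]
  calc ‖f ε‖ ≤ C * |ε| ^ (n + 1) := goal
    _ = C * ‖ε ^ (n + 1)‖ := by rw [Real.norm_eq_abs, abs_pow]

section Integrator

variable (m : ℕ) (G : (Fin m → ℝ) → Matrix (Fin m) (Fin m) ℝ) (U : (Fin m → ℝ) → ℝ)
  (q0 v0 : Fin m → ℝ)

/-- `g(x) = G(x)⁻¹ ∇U(x)` componentwise. -/
noncomputable def gfun (x : Fin m → ℝ) : Fin m → ℝ :=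
  fun k => ∑ l, (G x)⁻¹ k l * fderiv ℝ U x (Pi.single l 1)

/-- The acceleration `a(x, w)` of the Lagrangian equations of motion. -/
noncomputable def avec (x w : Fin m → ℝ) : Fin m → ℝ :=
  fun k => -(∑ i, ∑ j, christoffel m G k i j x * w i * w j) - gfun m G U x k

noncomputable def qbf (ε : ℝ) : Fin m → ℝ := q0 + (ε / 2) • v0

noncomputable def Af (ε : ℝ) : Matrix (Fin m) (Fin m) ℝ :=
  1 + 2 • Omega m G ε (qbf m q0 v0 ε) v0

noncomputable def bf (ε : ℝ) : Fin m → ℝ :=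
  v0 - ε • ((G (qbf m q0 v0 ε))⁻¹ *ᵥ gradU m U (qbf m q0 v0 ε))

noncomputable def vtf (ε : ℝ) : Fin m → ℝ :=
  (Af m G q0 v0 ε)⁻¹ *ᵥ bf m G U q0 v0 ε

noncomputable def A1f (ε : ℝ) : Matrix (Fin m) (Fin m) ℝ := Matrix.of fun i j =>
  (∑ k, christoffel m G i k j (qbf m q0 v0 ε) * v0 k)
    + ε * ∑ k, fderiv ℝ (christoffel m G i k j) (qbf m q0 v0 ε) (((1:ℝ)/2) • v0) * v0 k

noncomputable def b1f (ε : ℝ) : Fin m → ℝ := fun k =>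
  -(gfun m G U (qbf m q0 v0 ε) k
    + ε * fderiv ℝ (fun y => gfun m G U y k) (qbf m q0 v0 ε) (((1:ℝ)/2) • v0))

noncomputable def Wf (ε : ℝ) : Fin m → ℝ :=
  (Af m G q0 v0 ε)⁻¹ *ᵥ (b1f m G U q0 v0 ε - A1f m G q0 v0 ε *ᵥ vtf m G U q0 v0 ε)

lemma Af_apply (ε : ℝ) (i j : Fin m) :
    Af m G q0 v0 ε i j = (1 : Matrix (Fin m) (Fin m) ℝ) i j
      + ε * ∑ k, christoffel m G i k j (qbf m q0 v0 ε) * v0 k := by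
  simp only [Af, Matrix.add_apply, Matrix.smul_apply, Omega, Matrix.of_apply, smul_eq_mul]
  ring

lemma bf_apply (ε : ℝ) (k : Fin m) :
    bf m G U q0 v0 ε k = v0 k - ε * gfun m G U (qbf m q0 v0 ε) k := by
  simp only [bf, gfun, gradU, Pi.sub_apply, Pi.smul_apply, smul_eq_mul, Matrix.mulVec,
    dotProduct]

lemma Af_zero : Af m G q0 v0 0 = 1 := by
  ext i j
  rw [Af_apply]
  simp

lemma bf_zero : bf m G U q0 v0 0 = v0 := by
  funext k
  rw [bf_apply]
  simp

lemma vtf_zero : vtf m G U q0 v0 0 = v0 := by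
  rw [vtf, Af_zero, bf_zero, inv_one, Matrix.one_mulVec]

lemma hasDerivAt_qbf (ε : ℝ) :
    HasDerivAt (fun s => qbf m q0 v0 s) (((1:ℝ)/2) • v0) ε := by
  have h : HasDerivAt (fun s : ℝ => s / 2) ((1:ℝ)/2) ε := (hasDerivAt_id ε).div_const 2
  simpa [qbf] using (h.smul_const v0).const_add q0

lemma hasDerivAt_comp_qbf {g : (Fin m → ℝ) → ℝ} (hg : ContDiff ℝ (⊤ : ℕ∞) g) (ε : ℝ) :
    HasDerivAt (fun s => g (qbf m q0 v0 s))
      (fderiv ℝ g (qbf m q0 v0 ε) (((1:ℝ)/2) • v0)) ε :=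
  ((hg.differentiable (by simp) _).hasFDerivAt).comp_hasDerivAt ε (hasDerivAt_qbf m q0 v0 ε)

end Integrator

lemma mulVec_apply' {m : ℕ} (M : Matrix (Fin m) (Fin m) ℝ) (w : Fin m → ℝ) (k : Fin m) :
    (M *ᵥ w) k = ∑ j, M k j * w j := rfl

section Derivs

variable {m : ℕ} {G : (Fin m → ℝ) → Matrix (Fin m) (Fin m) ℝ} {U : (Fin m → ℝ) → ℝ}
  (hGsmooth : ∀ i j, ContDiff ℝ (⊤ : ℕ∞) fun x => G x i j)
  (hGdet : ∀ x, (G x).det ≠ 0) (hU : ContDiff ℝ (⊤ : ℕ∞) U)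
  (q0 v0 : Fin m → ℝ)

lemma qbf_zero : qbf m q0 v0 0 = q0 := by simp [qbf]

lemma qbf_contDiff : ContDiff ℝ (⊤ : ℕ∞) (qbf m q0 v0) := by
  unfold qbf
  exact contDiff_const.add ((contDiff_id.div_const 2).smul contDiff_const)

include hGsmooth hGdet hU in
lemma gfun_contDiff (k : Fin m) : ContDiff ℝ (⊤ : ℕ∞) fun x => gfun m G U x k := by
  unfold gfun
  exact ContDiff.sum fun l _ =>
    (contDiff_iff_contDiffAt.mpr fun x => contDiffAt_matrix_inv_entry hGsmooth (hGdet x) k l).mul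
      (contDiff_fderiv_apply hU _)

include hGsmooth hGdet in
lemma Af_entry_contDiff (i j : Fin m) :
    ContDiff ℝ (⊤ : ℕ∞) fun s => Af m G q0 v0 s i j := by
  have hfun : (fun s => Af m G q0 v0 s i j)
      = fun s => (1 : Matrix (Fin m) (Fin m) ℝ) i j
        + s * ∑ k, christoffel m G i k j (qbf m q0 v0 s) * v0 k :=
    funext fun s => Af_apply m G q0 v0 s i j
  rw [hfun]
  exact contDiff_const.add (contDiff_id.mul (ContDiff.sum fun k _ =>
    ((christoffel_contDiff hGsmooth hGdet i k j).comp (qbf_contDiff q0 v0)).mul contDiff_const))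

include hGsmooth hGdet hU in
lemma bf_entry_contDiff (k : Fin m) :
    ContDiff ℝ (⊤ : ℕ∞) fun s => bf m G U q0 v0 s k := by
  have hfun : (fun s => bf m G U q0 v0 s k)
      = fun s => v0 k - s * gfun m G U (qbf m q0 v0 s) k :=
    funext fun s => bf_apply m G U q0 v0 s k
  rw [hfun]
  exact contDiff_const.sub (contDiff_id.mul
    ((gfun_contDiff hGsmooth hGdet hU k).comp (qbf_contDiff q0 v0)))

include hGsmooth hGdet in
lemma hasDerivAt_Af (ε : ℝ) (i j : Fin m) :
    HasDerivAt (fun s => Af m G q0 v0 s i j) (A1f m G q0 v0 ε i j) ε := by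
  have hP : HasDerivAt (fun s => ∑ k, christoffel m G i k j (qbf m q0 v0 s) * v0 k)
      (∑ k, fderiv ℝ (christoffel m G i k j) (qbf m q0 v0 ε) (((1:ℝ)/2) • v0) * v0 k) ε :=
    HasDerivAt.fun_sum fun k _ =>
      (hasDerivAt_comp_qbf m q0 v0 (christoffel_contDiff hGsmooth hGdet i k j) ε).mul_const (v0 k)
  have h2 := ((hasDerivAt_id ε).fun_mul hP).const_add ((1 : Matrix (Fin m) (Fin m) ℝ) i j)
  have hfun : (fun s => Af m G q0 v0 s i j)
      = fun s => (1 : Matrix (Fin m) (Fin m) ℝ) i j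
        + s * ∑ k, christoffel m G i k j (qbf m q0 v0 s) * v0 k :=
    funext fun s => Af_apply m G q0 v0 s i j
  rw [hfun, A1f]
  simp only [Matrix.of_apply]
  refine h2.congr_deriv (Eq.symm ?_)
  simp only [id_eq]
  ring

include hGsmooth hGdet hU in
lemma hasDerivAt_bf (ε : ℝ) (k : Fin m) :
    HasDerivAt (fun s => bf m G U q0 v0 s k) (b1f m G U q0 v0 ε k) ε := by
  have hP : HasDerivAt (fun s => gfun m G U (qbf m q0 v0 s) k)
      (fderiv ℝ (fun y => gfun m G U y k) (qbf m q0 v0 ε) (((1:ℝ)/2) • v0)) ε :=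
    hasDerivAt_comp_qbf m q0 v0 (gfun_contDiff hGsmooth hGdet hU k) ε
  have h2 := ((hasDerivAt_id ε).fun_mul hP).const_sub (v0 k)
  have hfun : (fun s => bf m G U q0 v0 s k)
      = fun s => v0 k - s * gfun m G U (qbf m q0 v0 s) k :=
    funext fun s => bf_apply m G U q0 v0 s k
  rw [hfun]
  refine h2.congr_deriv (Eq.symm ?_)
  rw [b1f]
  simp only [id_eq]
  ring

end Derivs

section Derivs2

variable {m : ℕ} {G : (Fin m → ℝ) → Matrix (Fin m) (Fin m) ℝ} {U : (Fin m → ℝ) → ℝ}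
  (hGsmooth : ∀ i j, ContDiff ℝ (⊤ : ℕ∞) fun x => G x i j)
  (hGdet : ∀ x, (G x).det ≠ 0) (hU : ContDiff ℝ (⊤ : ℕ∞) U)
  (q0 v0 : Fin m → ℝ)

include hGsmooth hGdet in
lemma hasDerivAt_A1f_zero (i j : Fin m) :
    HasDerivAt (fun s => A1f m G q0 v0 s i j)
      (∑ k, fderiv ℝ (christoffel m G i k j) q0 v0 * v0 k) 0 := by
  set Q : ℝ → ℝ := fun s =>
    ∑ k, fderiv ℝ (christoffel m G i k j) (qbf m q0 v0 s) (((1:ℝ)/2) • v0) * v0 k with hQdef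
  have hQcd : ContDiff ℝ (⊤ : ℕ∞) Q :=
    ContDiff.sum fun k _ =>
      ((contDiff_fderiv_apply (christoffel_contDiff hGsmooth hGdet i k j) (((1:ℝ)/2) • v0)).comp
        (qbf_contDiff q0 v0)).mul contDiff_const
  have hP : HasDerivAt (fun s => ∑ k, christoffel m G i k j (qbf m q0 v0 s) * v0 k) (Q 0) 0 :=
    HasDerivAt.fun_sum fun k _ =>
      (hasDerivAt_comp_qbf m q0 v0 (christoffel_contDiff hGsmooth hGdet i k j) 0).mul_const (v0 k)
  have hsQ : HasDerivAt (fun s => s * Q s) (Q 0) 0 := by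
    have := (hasDerivAt_id (0:ℝ)).fun_mul (hQcd.differentiable (by simp) 0).hasDerivAt
    simpa using this
  have htot := hP.fun_add hsQ
  have hfun : (fun s => A1f m G q0 v0 s i j)
      = fun s => (∑ k, christoffel m G i k j (qbf m q0 v0 s) * v0 k) + s * Q s := rfl
  rw [hfun]
  refine htot.congr_deriv (Eq.symm ?_)
  rw [hQdef]
  simp only [qbf_zero, ← Finset.sum_add_distrib]
  apply Finset.sum_congr rfl
  intro k _
  have hlin : (fderiv ℝ (christoffel m G i k j) q0) (((1:ℝ)/2) • v0)
      = ((1:ℝ)/2) * fderiv ℝ (christoffel m G i k j) q0 v0 := by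
    rw [_root_.map_smul, smul_eq_mul]
  rw [hlin]
  ring

include hGsmooth hGdet hU in
lemma hasDerivAt_b1f_zero (k : Fin m) :
    HasDerivAt (fun s => b1f m G U q0 v0 s k)
      (-(fderiv ℝ (fun y => gfun m G U y k) q0 v0)) 0 := by
  set Q : ℝ → ℝ := fun s =>
    fderiv ℝ (fun y => gfun m G U y k) (qbf m q0 v0 s) (((1:ℝ)/2) • v0) with hQdef
  have hQcd : ContDiff ℝ (⊤ : ℕ∞) Q :=
    (contDiff_fderiv_apply (gfun_contDiff hGsmooth hGdet hU k) (((1:ℝ)/2) • v0)).comp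
      (qbf_contDiff q0 v0)
  have hP : HasDerivAt (fun s => gfun m G U (qbf m q0 v0 s) k) (Q 0) 0 :=
    hasDerivAt_comp_qbf m q0 v0 (gfun_contDiff hGsmooth hGdet hU k) 0
  have hsQ : HasDerivAt (fun s => s * Q s) (Q 0) 0 := by
    have := (hasDerivAt_id (0:ℝ)).fun_mul (hQcd.differentiable (by simp) 0).hasDerivAt
    simpa using this
  have htot := (hP.fun_add hsQ).fun_neg
  have hfun : (fun s => b1f m G U q0 v0 s k)
      = fun s => -(gfun m G U (qbf m q0 v0 s) k + s * Q s) := rfl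
  rw [hfun]
  refine htot.congr_deriv (Eq.symm ?_)
  rw [hQdef]
  simp only [qbf_zero]
  have hlin : (fderiv ℝ (fun y => gfun m G U y k) q0) (((1:ℝ)/2) • v0)
      = ((1:ℝ)/2) * fderiv ℝ (fun y => gfun m G U y k) q0 v0 := by
    rw [_root_.map_smul, smul_eq_mul]
  rw [hlin]
  ring

end Derivs2

open Asymptotics Filter in
/-- the inverted Lagrangian leapfrog integrator has at least third-order local
error (i.e. second-order accuracy): `‖Ψ_ε(q_0, v_0) − (q_ε, v_ε)‖ = O(ε³)` as `ε → 0`. -/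
theorem invertedLagrangianLeapfrog_second_order
    (m : ℕ) (hm : 1 ≤ m)
    (G : (Fin m → ℝ) → Matrix (Fin m) (Fin m) ℝ)
    (hGsmooth : ∀ i j, ContDiff ℝ (⊤ : ℕ∞) fun q => G q i j)
    (hGpd : ∀ q, (G q).PosDef)
    (U : (Fin m → ℝ) → ℝ) (hU : ContDiff ℝ (⊤ : ℕ∞) U)
    (q v : ℝ → (Fin m → ℝ)) (δ : ℝ) (hδ : 0 < δ)
    (hsol : ContDiffOn ℝ (⊤ : ℕ∞) (fun t => (q t, v t)) (Set.Ioo (-δ) δ))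
    (hq : ∀ t ∈ Set.Ioo (-δ) δ, HasDerivAt q (v t) t)
    (hv : ∀ t ∈ Set.Ioo (-δ) δ, ∀ k : Fin m,
      HasDerivAt (fun s => v s k)
        (-(∑ i, ∑ j, christoffel m G k i j (q t) * v t i * v t j)
          - ∑ l, (G (q t))⁻¹ k l * fderiv ℝ U (q t) (Pi.single l 1)) t) :
    (fun ε : ℝ => invertedLagrangianLeapfrog m G U ε (q 0, v 0) - (q ε, v ε))
      =O[nhds 0] fun ε : ℝ => ε ^ 3 := by
  classical
  have hGdet : ∀ x, (G x).det ≠ 0 := fun x => (hGpd x).det_pos.ne'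
  have hGsymm : ∀ x i j, G x i j = G x j i := by
    intro x i j
    rw [← (hGpd x).1.apply i j, star_trivial]
  set q0 := q 0 with hq0def
  set v0 := v 0 with hv0def
  have h0δ : (0:ℝ) ∈ Set.Ioo (-δ) δ := ⟨neg_lt_zero.mpr hδ, hδ⟩
  set a0 : Fin m → ℝ := avec m G U q0 v0 with ha0def
  have hv' : ∀ t ∈ Set.Ioo (-δ) δ, ∀ k, HasDerivAt (fun s => v s k)
      (avec m G U (q t) (v t) k) t := fun t ht k => hv t ht k
  have hvpi : ∀ t ∈ Set.Ioo (-δ) δ, HasDerivAt v (avec m G U (q t) (v t)) t :=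
    fun t ht => hasDerivAt_pi.mpr (hv' t ht)
  -- neighborhood of invertibility
  have hAcd : ∀ i j, ContDiff ℝ (⊤ : ℕ∞) fun s => Af m G q0 v0 s i j := fun i j =>
    Af_entry_contDiff hGsmooth hGdet q0 v0 i j
  have hdetAcont : Continuous fun s => (Af m G q0 v0 s).det :=
    (contDiff_matrix_det hAcd).continuous
  have hdetA0 : (Af m G q0 v0 0).det = 1 := by rw [Af_zero]; exact Matrix.det_one
  have hopen : IsOpen ({s | (Af m G q0 v0 s).det ≠ 0} ∩ Set.Ioo (-δ) δ) :=
    (isOpen_compl_singleton.preimage hdetAcont).inter isOpen_Ioo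
  have h0mem : (0:ℝ) ∈ {s | (Af m G q0 v0 s).det ≠ 0} ∩ Set.Ioo (-δ) δ :=
    ⟨by simp [hdetA0], h0δ⟩
  obtain ⟨r, hr0, hrsub⟩ := Metric.isOpen_iff.mp hopen 0 h0mem
  set I : Set ℝ := Set.Ioo (-r) r with hIdef
  have hIsub : I ⊆ {s | (Af m G q0 v0 s).det ≠ 0} ∩ Set.Ioo (-δ) δ := by
    intro s hs
    apply hrsub
    rw [Metric.mem_ball, Real.dist_eq, sub_zero, abs_lt]
    exact ⟨hs.1, hs.2⟩
  have hIopen : IsOpen I := isOpen_Ioo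
  have hI0 : (0:ℝ) ∈ I := ⟨neg_lt_zero.mpr hr0, hr0⟩
  have hdetI : ∀ ε ∈ I, (Af m G q0 v0 ε).det ≠ 0 := fun ε hε => (hIsub hε).1
  have hIδ : ∀ ε ∈ I, ε ∈ Set.Ioo (-δ) δ := fun ε hε => (hIsub hε).2
  have hunit : ∀ ε ∈ I, IsUnit (Af m G q0 v0 ε).det := fun ε hε =>
    isUnit_iff_ne_zero.mpr (hdetI ε hε)
  -- smoothness of vtf on I
  have hbcd : ∀ k, ContDiff ℝ (⊤ : ℕ∞) fun s => bf m G U q0 v0 s k :=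
    bf_entry_contDiff hGsmooth hGdet hU q0 v0
  have hvtf_cd : ContDiffOn ℝ (⊤ : ℕ∞) (vtf m G U q0 v0) I := by
    rw [contDiffOn_pi]
    intro k
    have heq : (fun ε => vtf m G U q0 v0 ε k) = fun ε => ((Af m G q0 v0 ε).det)⁻¹
        * ∑ j, (Af m G q0 v0 ε).adjugate k j * bf m G U q0 v0 ε j := by
      funext ε
      rw [vtf, Matrix.inv_def, Ring.inverse_eq_inv', Matrix.smul_mulVec]
      simp [Matrix.mulVec, dotProduct]
    rw [heq]
    exact ContDiffOn.mul (((contDiff_matrix_det hAcd).contDiffOn).inv hdetI)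
      (ContDiffOn.sum fun j _ =>
        ((contDiff_matrix_adjugate hAcd k j).contDiffOn).mul ((hbcd j).contDiffOn))
  have hvtf_diff : ∀ ε ∈ I, DifferentiableAt ℝ (vtf m G U q0 v0) ε := fun ε hε =>
    (hvtf_cd.differentiableOn (by simp)).differentiableAt (hIopen.mem_nhds hε)
  have hAvt : ∀ ε ∈ I, Af m G q0 v0 ε *ᵥ vtf m G U q0 v0 ε = bf m G U q0 v0 ε := by
    intro ε hε
    rw [vtf, Matrix.mulVec_mulVec, Matrix.mul_nonsing_inv _ (hunit ε hε), Matrix.one_mulVec]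
  -- the derivative of vtf on I is Wf
  have hvt_deriv : ∀ ε ∈ I, HasDerivAt (vtf m G U q0 v0) (Wf m G U q0 v0 ε) ε := by
    intro ε hε
    have hw : HasDerivAt (vtf m G U q0 v0) (deriv (vtf m G U q0 v0) ε) ε :=
      (hvtf_diff ε hε).hasDerivAt
    have hcomp := hasDerivAt_pi.mp hw
    have hsum : ∀ k, HasDerivAt (fun s => ∑ j, Af m G q0 v0 s k j * vtf m G U q0 v0 s j)
        (∑ j, (A1f m G q0 v0 ε k j * vtf m G U q0 v0 ε j
          + Af m G q0 v0 ε k j * deriv (vtf m G U q0 v0) ε j)) ε :=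
      fun k => HasDerivAt.fun_sum fun j _ =>
        (hasDerivAt_Af hGsmooth hGdet q0 v0 ε k j).mul (hcomp j)
    have hbd : ∀ k, HasDerivAt (fun s => bf m G U q0 v0 s k) (b1f m G U q0 v0 ε k) ε :=
      hasDerivAt_bf hGsmooth hGdet hU q0 v0 ε
    have hEq : ∀ k, ∑ j, (A1f m G q0 v0 ε k j * vtf m G U q0 v0 ε j
        + Af m G q0 v0 ε k j * deriv (vtf m G U q0 v0) ε j) = b1f m G U q0 v0 ε k := by
      intro k
      have hev : (fun s => bf m G U q0 v0 s k)
          =ᶠ[nhds ε] (fun s => ∑ j, Af m G q0 v0 s k j * vtf m G U q0 v0 s j) := by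
        filter_upwards [hIopen.mem_nhds hε] with s hs
        have h2 := congrFun (hAvt s hs) k
        rw [← h2, mulVec_apply']
      exact ((hsum k).congr_of_eventuallyEq hev).unique (hbd k)
    have hAw : Af m G q0 v0 ε *ᵥ deriv (vtf m G U q0 v0) ε
        = b1f m G U q0 v0 ε - A1f m G q0 v0 ε *ᵥ vtf m G U q0 v0 ε := by
      funext k
      have h3 := hEq k
      rw [Finset.sum_add_distrib] at h3
      rw [Pi.sub_apply, mulVec_apply', mulVec_apply']
      linarith [h3]
    have hfinal : deriv (vtf m G U q0 v0) ε = Wf m G U q0 v0 ε := by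
      rw [Wf, ← hAw, Matrix.mulVec_mulVec, Matrix.nonsing_inv_mul _ (hunit ε hε),
        Matrix.one_mulVec]
    rw [← hfinal]
    exact hw
  -- value of Wf at 0
  have hA1f0 : ∀ k j, A1f m G q0 v0 0 k j = ∑ i, christoffel m G k i j q0 * v0 i := by
    intro k j
    rw [A1f]
    simp [qbf_zero]
  have hW0 : Wf m G U q0 v0 0 = a0 := by
    rw [Wf, Af_zero, inv_one, Matrix.one_mulVec, vtf_zero]
    funext k
    rw [Pi.sub_apply, mulVec_apply']
    have hb1 : b1f m G U q0 v0 0 k = -(gfun m G U q0 k) := by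
      rw [b1f]; simp [qbf_zero]
    rw [hb1]
    simp only [hA1f0]
    rw [ha0def, avec]
    simp only [Finset.sum_mul]
    have hsc : ∑ j, ∑ i, christoffel m G k i j q0 * v0 i * v0 j
        = ∑ i, ∑ j, christoffel m G k i j q0 * v0 i * v0 j := Finset.sum_comm
    rw [hsc]
    ring
  -- second derivative of vtf at 0
  have hWev : (fun s => Wf m G U q0 v0 s) =ᶠ[nhds 0] deriv (vtf m G U q0 v0) := by
    filter_upwards [hIopen.mem_nhds hI0] with s hs
    exact ((hvt_deriv s hs).deriv).symm
  have hdvt_cd : ContDiffOn ℝ (⊤ : ℕ∞) (deriv (vtf m G U q0 v0)) I :=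
    hvtf_cd.deriv_of_isOpen hIopen (by simp)
  have hWdiff : DifferentiableAt ℝ (Wf m G U q0 v0) 0 :=
    hWev.differentiableAt_iff.mpr ((hdvt_cd.differentiableOn (by simp)).differentiableAt
      (hIopen.mem_nhds hI0))
  have hw2 : HasDerivAt (Wf m G U q0 v0) (deriv (Wf m G U q0 v0) 0) 0 := hWdiff.hasDerivAt
  set w2 := deriv (Wf m G U q0 v0) 0 with hw2def
  have hAW : ∀ s ∈ I, Af m G q0 v0 s *ᵥ Wf m G U q0 v0 s
      = b1f m G U q0 v0 s - A1f m G q0 v0 s *ᵥ vtf m G U q0 v0 s := by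
    intro s hs
    rw [Wf, Matrix.mulVec_mulVec, Matrix.mul_nonsing_inv _ (hunit s hs), Matrix.one_mulVec]
  have hw2val : ∀ k, w2 k = -(fderiv ℝ (fun y => gfun m G U y k) q0 v0)
      - (∑ j, (∑ i, fderiv ℝ (christoffel m G k i j) q0 v0 * v0 i) * v0 j)
      - 2 * ∑ j, (∑ i, christoffel m G k i j q0 * v0 i) * a0 j := by
    intro k
    have hWc := hasDerivAt_pi.mp hw2
    have hvt0 : ∀ j, HasDerivAt (fun s => vtf m G U q0 v0 s j) (a0 j) 0 := by
      intro j
      have := hasDerivAt_pi.mp (hvt_deriv 0 hI0) j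
      rwa [hW0] at this
    have hL : HasDerivAt (fun s => ∑ j, Af m G q0 v0 s k j * Wf m G U q0 v0 s j)
        (∑ j, (A1f m G q0 v0 0 k j * Wf m G U q0 v0 0 j + Af m G q0 v0 0 k j * w2 j)) 0 :=
      HasDerivAt.fun_sum fun j _ => (hasDerivAt_Af hGsmooth hGdet q0 v0 0 k j).mul (hWc j)
    have hR : HasDerivAt (fun s => b1f m G U q0 v0 s k
          - ∑ j, A1f m G q0 v0 s k j * vtf m G U q0 v0 s j)
        ((-(fderiv ℝ (fun y => gfun m G U y k) q0 v0))
          - ∑ j, ((∑ i, fderiv ℝ (christoffel m G k i j) q0 v0 * v0 i) * vtf m G U q0 v0 0 j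
            + A1f m G q0 v0 0 k j * a0 j)) 0 :=
      (hasDerivAt_b1f_zero hGsmooth hGdet hU q0 v0 k).sub
        (HasDerivAt.fun_sum fun j _ => (hasDerivAt_A1f_zero hGsmooth hGdet q0 v0 k j).mul (hvt0 j))
    have hev2 : (fun s => b1f m G U q0 v0 s k
          - ∑ j, A1f m G q0 v0 s k j * vtf m G U q0 v0 s j)
        =ᶠ[nhds 0] (fun s => ∑ j, Af m G q0 v0 s k j * Wf m G U q0 v0 s j) := by
      filter_upwards [hIopen.mem_nhds hI0] with s hs
      have h2 := congrFun (hAW s hs) k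
      rw [Pi.sub_apply, mulVec_apply', mulVec_apply'] at h2
      rw [← h2]
    have huniq := ((hL.congr_of_eventuallyEq hev2).unique hR).symm
    rw [vtf_zero] at huniq
    rw [hW0] at huniq
    simp only [hA1f0, Af_zero, Matrix.one_apply] at huniq
    rw [Finset.sum_add_distrib, Finset.sum_add_distrib] at huniq
    have hone : ∑ j, (if k = j then (1:ℝ) else 0) * w2 j = w2 k := by
      simp [Finset.sum_ite_eq]
    rw [hone] at huniq
    linarith [huniq]
  -- the second derivative of the exact solution's velocity at 0
  set cval : Fin m → ℝ := fun k =>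
    -(∑ i, ∑ j, (fderiv ℝ (christoffel m G k i j) q0 v0 * v0 i * v0 j
      + christoffel m G k i j q0 * (a0 i * v0 j + v0 i * a0 j)))
    - fderiv ℝ (fun y => gfun m G U y k) q0 v0 with hcvaldef
  have hq0' : HasDerivAt q v0 0 := hq 0 h0δ
  have hvk0 : ∀ i, HasDerivAt (fun t => v t i) (a0 i) 0 := fun i => hv' 0 h0δ i
  have havec_deriv : ∀ k, HasDerivAt (fun t => avec m G U (q t) (v t) k) (cval k) 0 := by
    intro k
    have hΓt : ∀ i j, HasDerivAt (fun t => christoffel m G k i j (q t))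
        (fderiv ℝ (christoffel m G k i j) q0 v0) 0 := fun i j =>
      ((((christoffel_contDiff hGsmooth hGdet k i j).differentiable (by simp)
        _).hasFDerivAt).comp_hasDerivAt 0 hq0')
    have hgt : HasDerivAt (fun t => gfun m G U (q t) k)
        (fderiv ℝ (fun y => gfun m G U y k) q0 v0) 0 :=
      ((((gfun_contDiff hGsmooth hGdet hU k).differentiable (by simp)
        _).hasFDerivAt).comp_hasDerivAt 0 hq0')
    have hsum : HasDerivAt (fun t => ∑ i, ∑ j, christoffel m G k i j (q t) * v t i * v t j)
        (∑ i, ∑ j, ((fderiv ℝ (christoffel m G k i j) q0 v0 * v0 i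
            + christoffel m G k i j q0 * a0 i) * v0 j
          + christoffel m G k i j q0 * v0 i * a0 j)) 0 :=
      HasDerivAt.fun_sum fun i _ => HasDerivAt.fun_sum fun j _ =>
        ((hΓt i j).mul (hvk0 i)).mul (hvk0 j)
    have htot := (hsum.neg).sub hgt
    have hshape : HasDerivAt (fun t => avec m G U (q t) (v t) k)
        (-(∑ i, ∑ j, ((fderiv ℝ (christoffel m G k i j) q0 v0 * v0 i
            + christoffel m G k i j q0 * a0 i) * v0 j
          + christoffel m G k i j q0 * v0 i * a0 j))
          - fderiv ℝ (fun y => gfun m G U y k) q0 v0) 0 := htot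
    have hss : ∑ i, ∑ j, ((fderiv ℝ (christoffel m G k i j) q0 v0 * v0 i
            + christoffel m G k i j q0 * a0 i) * v0 j
          + christoffel m G k i j q0 * v0 i * a0 j)
        = ∑ i, ∑ j, (fderiv ℝ (christoffel m G k i j) q0 v0 * v0 i * v0 j
          + christoffel m G k i j q0 * (a0 i * v0 j + v0 i * a0 j)) :=
      Finset.sum_congr rfl fun i _ => Finset.sum_congr rfl fun j _ => by ring
    have hval : (-(∑ i, ∑ j, ((fderiv ℝ (christoffel m G k i j) q0 v0 * v0 i
            + christoffel m G k i j q0 * a0 i) * v0 j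
          + christoffel m G k i j q0 * v0 i * a0 j))
          - fderiv ℝ (fun y => gfun m G U y k) q0 v0) = cval k := by
      rw [hcvaldef, hss]
    exact hshape.congr_deriv hval
  have hvec2 : HasDerivAt (fun t => avec m G U (q t) (v t)) cval 0 :=
    hasDerivAt_pi.mpr havec_deriv
  -- key algebraic identity : w2 = cval
  have hkey : w2 = cval := by
    funext k
    have h1 : ∑ j, (∑ i, fderiv ℝ (christoffel m G k i j) q0 v0 * v0 i) * v0 j
        = ∑ i, ∑ j, fderiv ℝ (christoffel m G k i j) q0 v0 * v0 i * v0 j := by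
      simp only [Finset.sum_mul]
      exact Finset.sum_comm
    have h2 : ∑ j, (∑ i, christoffel m G k i j q0 * v0 i) * a0 j
        = ∑ i, ∑ j, christoffel m G k i j q0 * (v0 i * a0 j) := by
      simp only [Finset.sum_mul]
      rw [Finset.sum_comm]
      exact Finset.sum_congr rfl fun i _ => Finset.sum_congr rfl fun j _ => by ring
    have h3 : ∑ i, ∑ j, christoffel m G k i j q0 * (a0 i * v0 j)
        = ∑ i, ∑ j, christoffel m G k i j q0 * (v0 i * a0 j) := by
      rw [Finset.sum_comm]
      exact Finset.sum_congr rfl fun x _ => Finset.sum_congr rfl fun y _ => by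
        rw [christoffel_symm_s11 hGsymm k y x q0]; ring
    have hc : cval k = -(∑ i, ∑ j, fderiv ℝ (christoffel m G k i j) q0 v0 * v0 i * v0 j)
        - (∑ i, ∑ j, christoffel m G k i j q0 * (a0 i * v0 j))
        - (∑ i, ∑ j, christoffel m G k i j q0 * (v0 i * a0 j))
        - fderiv ℝ (fun y => gfun m G U y k) q0 v0 := by
      rw [hcvaldef]
      simp only [mul_add, Finset.sum_add_distrib]
      ring
    rw [hw2val k, h1, h2, hc, h3]
    ring
  -- the local error function and its derivative
  set Fq : ℝ → (Fin m → ℝ) := fun ε => qbf m q0 v0 ε + (ε/2) • vtf m G U q0 v0 ε with hFqdef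
  set f : ℝ → (Fin m → ℝ) × (Fin m → ℝ) :=
    fun ε => (Fq ε - q ε, vtf m G U q0 v0 ε - v ε) with hfdef
  have hgoal : (fun ε : ℝ => invertedLagrangianLeapfrog m G U ε (q0, v0) - (q ε, v ε)) = f := rfl
  have hqcd : ContDiffOn ℝ (⊤ : ℕ∞) q (Set.Ioo (-δ) δ) := contDiff_fst.comp_contDiffOn hsol
  have hvcd : ContDiffOn ℝ (⊤ : ℕ∞) v (Set.Ioo (-δ) δ) := contDiff_snd.comp_contDiffOn hsol
  have hFqcd : ContDiffOn ℝ (⊤ : ℕ∞) Fq I :=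
    ((qbf_contDiff q0 v0).contDiffOn).add (((contDiff_id.div_const 2).contDiffOn).smul hvtf_cd)
  have hIss : I ⊆ Set.Ioo (-δ) δ := fun s hs => hIδ s hs
  have hfcd : ContDiffOn ℝ (⊤ : ℕ∞) f I :=
    (hFqcd.sub (hqcd.mono hIss)).prodMk (hvtf_cd.sub (hvcd.mono hIss))
  set Φ : ℝ → (Fin m → ℝ) × (Fin m → ℝ) := fun ε =>
    (((1:ℝ)/2) • v0 + ((ε/2) • Wf m G U q0 v0 ε + ((1:ℝ)/2) • vtf m G U q0 v0 ε) - v ε,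
      Wf m G U q0 v0 ε - avec m G U (q ε) (v ε)) with hΦdef
  have hfD : ∀ ε ∈ I, HasDerivAt f (Φ ε) ε := by
    intro ε hε
    have h1 : HasDerivAt (fun s => (s/2) • vtf m G U q0 v0 s)
        ((ε/2) • Wf m G U q0 v0 ε + ((1:ℝ)/2) • vtf m G U q0 v0 ε) ε :=
      ((hasDerivAt_id ε).div_const 2).smul (hvt_deriv ε hε)
    have hq1 : HasDerivAt (fun s => Fq s - q s)
        (((1:ℝ)/2) • v0 + ((ε/2) • Wf m G U q0 v0 ε + ((1:ℝ)/2) • vtf m G U q0 v0 ε)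
          - v ε) ε :=
      ((hasDerivAt_qbf m q0 v0 ε).add h1).sub (hq ε (hIδ ε hε))
    have hv1 : HasDerivAt (fun s => vtf m G U q0 v0 s - v s)
        (Wf m G U q0 v0 ε - avec m G U (q ε) (v ε)) ε :=
      (hvt_deriv ε hε).sub (hvpi ε (hIδ ε hε))
    exact hq1.prodMk hv1
  have hhalf : ((1:ℝ)/2) • v0 + ((1:ℝ)/2) • v0 = v0 := by
    rw [← add_smul]; norm_num
  have hf0 : f 0 = 0 := by
    rw [hfdef]
    simp only [hFqdef, qbf_zero, vtf_zero]
    rw [Prod.mk_eq_zero]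
    constructor
    · simp [hq0def]
    · simp [hv0def]
  have hΦ0 : Φ 0 = 0 := by
    rw [hΦdef]
    simp only [vtf_zero, hW0]
    rw [Prod.mk_eq_zero]
    constructor
    · rw [show ((0:ℝ)/2) = 0 by norm_num, zero_smul, zero_add, hhalf, sub_self]
    · rw [← ha0def, sub_self]
  have hΦD : HasDerivAt Φ 0 0 := by
    have hA : HasDerivAt (fun s => (s/2) • Wf m G U q0 v0 s)
        (((0:ℝ)/2) • w2 + ((1:ℝ)/2) • Wf m G U q0 v0 0) 0 :=
      ((hasDerivAt_id 0).div_const 2).smul hw2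
    have hB : HasDerivAt (fun s => ((1:ℝ)/2) • vtf m G U q0 v0 s)
        (((1:ℝ)/2) • Wf m G U q0 v0 0) 0 := (hvt_deriv 0 hI0).const_smul ((1:ℝ)/2)
    have hC : HasDerivAt (fun s => ((1:ℝ)/2) • v0
          + ((s/2) • Wf m G U q0 v0 s + ((1:ℝ)/2) • vtf m G U q0 v0 s) - v s)
        ((((0:ℝ)/2) • w2 + ((1:ℝ)/2) • Wf m G U q0 v0 0 + ((1:ℝ)/2) • Wf m G U q0 v0 0)
          - a0) 0 :=
      ((hA.add hB).const_add (((1:ℝ)/2) • v0)).sub (hvpi 0 h0δ)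
    have hD : HasDerivAt (fun s => Wf m G U q0 v0 s - avec m G U (q s) (v s))
        (w2 - cval) 0 := hw2.sub hvec2
    have hprod := hC.prodMk hD
    have hzero : ((((0:ℝ)/2) • w2 + ((1:ℝ)/2) • Wf m G U q0 v0 0 + ((1:ℝ)/2) • Wf m G U q0 v0 0
          - a0 : Fin m → ℝ), (w2 - cval : Fin m → ℝ))
        = (0 : (Fin m → ℝ) × (Fin m → ℝ)) := by
      rw [Prod.mk_eq_zero]
      constructor
      · rw [hW0, show ((0:ℝ)/2) = 0 by norm_num, zero_smul, zero_add,
          show ((1:ℝ)/2) • a0 + ((1:ℝ)/2) • a0 = a0 by rw [← add_smul]; norm_num, sub_self]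
      · rw [hkey, sub_self]
    rw [hΦdef]
    exact hprod.congr_deriv hzero
  have hderiv_f0 : deriv f 0 = 0 := by rw [(hfD 0 hI0).deriv, hΦ0]
  have hevdf : deriv f =ᶠ[nhds 0] Φ := by
    filter_upwards [hIopen.mem_nhds hI0] with s hs
    exact (hfD s hs).deriv
  have hderiv2_f0 : deriv (deriv f) 0 = 0 := by rw [hevdf.deriv_eq, hΦD.deriv]
  have hd1cd : ContDiffOn ℝ (⊤ : ℕ∞) (deriv f) I := hfcd.deriv_of_isOpen hIopen (by simp)
  have hd2cd : ContDiffOn ℝ (⊤ : ℕ∞) (deriv (deriv f)) I := hd1cd.deriv_of_isOpen hIopen (by simp)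
  have hd3cont : ContinuousOn (deriv (deriv (deriv f))) I :=
    hd2cd.continuousOn_deriv_of_isOpen hIopen (by simp)
  have hdiff_f : ∀ᶠ x in nhds (0:ℝ), DifferentiableAt ℝ f x := by
    filter_upwards [hIopen.mem_nhds hI0] with s hs
    exact (hfD s hs).differentiableAt
  have hdiff_d1 : ∀ᶠ x in nhds (0:ℝ), DifferentiableAt ℝ (deriv f) x := by
    filter_upwards [hIopen.mem_nhds hI0] with s hs
    exact (hd1cd.differentiableOn (by simp)).differentiableAt (hIopen.mem_nhds hs)
  have hdiff_d2 : ∀ᶠ x in nhds (0:ℝ), DifferentiableAt ℝ (deriv (deriv f)) x := by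
    filter_upwards [hIopen.mem_nhds hI0] with s hs
    exact (hd2cd.differentiableOn (by simp)).differentiableAt (hIopen.mem_nhds hs)
  have hbound : deriv (deriv (deriv f)) =O[nhds 0] (fun x : ℝ => x ^ 0) := by
    have hct : ContinuousAt (deriv (deriv (deriv f))) 0 :=
      hd3cont.continuousAt (hIopen.mem_nhds hI0)
    rw [Asymptotics.isBigO_iff]
    refine ⟨‖deriv (deriv (deriv f)) 0‖ + 1, ?_⟩
    filter_upwards [hct.norm.eventually_lt_const (lt_add_one _)] with x hx
    simpa using hx.le
  have hO1 : deriv (deriv f) =O[nhds 0] fun x : ℝ => x ^ (0 + 1) :=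
    isBigO_pow_succ_of_deriv hdiff_d2 hderiv2_f0 hbound
  have hO2 : deriv f =O[nhds 0] fun x : ℝ => x ^ (1 + 1) :=
    isBigO_pow_succ_of_deriv hdiff_d1 hderiv_f0 hO1
  have hO3 : f =O[nhds 0] fun x : ℝ => x ^ (2 + 1) :=
    isBigO_pow_succ_of_deriv hdiff_f hf0 hO2
  rw [hgoal]
  exact hO3
end

section
/- Involutive Monte Carlo satisfies detailed balance: let Φ : ℝ^n → ℝ^n be a continuously differentiable involution (Φ ∘ Φ = id), let π : ℝ^n → ℝ be a strictly positive integrable probability density with respect to Lebesgue measure, and define the acceptance probability α(x) = min{1, (π(Φ(x))/π(x)) · |det DΦ(x)|}, where DΦ(x) is the Jacobian matrix of Φ at x. Then for all Borel sets S, T ⊆ ℝ^n: ∫_S α(x) · 1{Φ(x) ∈ T} · π(x) dx = ∫_T α(x) · 1{Φ(x) ∈ S} · π(x) dx. -/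
open MeasureTheory

/-- involutive Monte Carlo satisfies detailed balance: for a C¹
involution `Φ`, a strictly positive integrable density `π`, and the acceptance
probability `α(x) = min{1, (π(Φ(x))/π(x))·|det DΦ(x)|}`, the acceptance part of the
kernel is symmetric: `∫_S α·1{Φ ∈ T}·π = ∫_T α·1{Φ ∈ S}·π`. -/
theorem involutive_monte_carlo_detailed_balance
    (n : ℕ) (hn : 1 ≤ n)
    (Φ : (Fin n → ℝ) → (Fin n → ℝ))
    (hΦ : ContDiff ℝ 1 Φ) (hinv : Φ ∘ Φ = id)
    (π : (Fin n → ℝ) → ℝ)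
    (hπpos : ∀ x, 0 < π x)
    (hπint : Integrable π volume)
    (hπprob : ∫ x, π x = 1)
    (α : (Fin n → ℝ) → ℝ)
    (hα : ∀ x, α x = min 1 ((π (Φ x) / π x) *
      |LinearMap.det ((fderiv ℝ Φ x : (Fin n → ℝ) →ₗ[ℝ] (Fin n → ℝ)))|)) :
    ∀ S T : Set (Fin n → ℝ), MeasurableSet S → MeasurableSet T →
      ∫ x in S, α x * Set.indicator T (fun _ => (1 : ℝ)) (Φ x) * π x
        = ∫ x in T, α x * Set.indicator S (fun _ => (1 : ℝ)) (Φ x) * π x := by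
  intro S T hS hT
  have hΦdiff : Differentiable ℝ Φ := hΦ.differentiable one_ne_zero
  have hΦΦ : ∀ x, Φ (Φ x) = x := fun x => congrFun hinv x
  have hΦinj : Function.Injective Φ := Function.LeftInverse.injective hΦΦ
  set J : (Fin n → ℝ) → ℝ := fun x =>
    |LinearMap.det ((fderiv ℝ Φ x : (Fin n → ℝ) →ₗ[ℝ] (Fin n → ℝ)))| with hJdef
  have hJnonneg : ∀ x, 0 ≤ J x := fun x => abs_nonneg _
  -- Jacobian cocycle: J (Φ x) * J x = 1
  have hJmul : ∀ x, J (Φ x) * J x = 1 := by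
    intro x
    have h1 : HasFDerivAt (Φ ∘ Φ) ((fderiv ℝ Φ (Φ x)).comp (fderiv ℝ Φ x)) x :=
      (hΦdiff (Φ x)).hasFDerivAt.comp x (hΦdiff x).hasFDerivAt
    rw [hinv] at h1
    have h2 : HasFDerivAt (id : (Fin n → ℝ) → (Fin n → ℝ))
        (ContinuousLinearMap.id ℝ (Fin n → ℝ)) x := hasFDerivAt_id x
    have heq : (fderiv ℝ Φ (Φ x)).comp (fderiv ℝ Φ x)
        = ContinuousLinearMap.id ℝ (Fin n → ℝ) := h1.unique h2
    have hdet : LinearMap.det ((fderiv ℝ Φ (Φ x) : (Fin n → ℝ) →ₗ[ℝ] (Fin n → ℝ)).comp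
        (fderiv ℝ Φ x : (Fin n → ℝ) →ₗ[ℝ] (Fin n → ℝ))) = 1 := by
      have : ((fderiv ℝ Φ (Φ x)).comp (fderiv ℝ Φ x) : (Fin n → ℝ) →ₗ[ℝ] (Fin n → ℝ))
          = LinearMap.id := by rw [heq]; rfl
      rw [← ContinuousLinearMap.toLinearMap_comp, this, LinearMap.det_id]
    rw [LinearMap.det_comp] at hdet
    simp only [hJdef]
    rw [← abs_mul, hdet, abs_one]
  -- key symmetry of α·π under Φ
  have hkey : ∀ x, J x * (α (Φ x) * π (Φ x)) = α x * π x := by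
    intro x
    have hαπ : ∀ y, α y * π y = min (π y) (π (Φ y) * J y) := by
      intro y
      rw [hα y]
      rw [min_mul_of_nonneg _ _ (hπpos y).le, one_mul]
      congr 1
      rw [mul_right_comm, div_mul_cancel₀ _ (hπpos y).ne']
    rw [mul_comm (J x), hαπ, hαπ, min_mul_of_nonneg _ _ (hJnonneg x), hΦΦ x]
    rw [mul_assoc, hJmul x, mul_one, min_comm]
  set f : (Fin n → ℝ) → ℝ := fun x => α x * π x with hfdef
  have hΦmeas : Measurable Φ := hΦ.continuous.measurable
  -- rewrite both sides as integrals over intersections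
  have hrw : ∀ (A B : Set (Fin n → ℝ)), MeasurableSet A → MeasurableSet B →
      ∫ x in A, α x * Set.indicator B (fun _ => (1 : ℝ)) (Φ x) * π x
        = ∫ x in A ∩ Φ ⁻¹' B, f x := by
    intro A B hA hB
    rw [← setIntegral_indicator (hB.preimage hΦmeas)]
    apply setIntegral_congr_fun hA
    intro x _
    dsimp only
    by_cases hx : Φ x ∈ B
    · rw [Set.indicator_of_mem hx, Set.indicator_of_mem (Set.mem_preimage.2 hx)]
      simp [hfdef]
    · rw [Set.indicator_of_notMem hx,
        Set.indicator_of_notMem (fun h : x ∈ Φ ⁻¹' B => hx h)]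
      simp
  rw [hrw S T hS hT, hrw T S hT hS]
  -- change of variables on A := S ∩ Φ⁻¹' T
  set A : Set (Fin n → ℝ) := S ∩ Φ ⁻¹' T with hAdef
  have hAmeas : MeasurableSet A := hS.inter (hT.preimage hΦmeas)
  have himg : Φ '' A = T ∩ Φ ⁻¹' S := by
    rw [Set.image_eq_preimage_of_inverse hΦΦ hΦΦ]
    ext x
    simp [hAdef, Set.mem_preimage, hΦΦ x, and_comm]
  have hcov := integral_image_eq_integral_abs_det_fderiv_smul volume hAmeas
    (fun x _ => (hΦdiff x).hasFDerivAt.hasFDerivWithinAt) (hΦinj.injOn) f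
  rw [himg] at hcov
  rw [hcov]
  apply setIntegral_congr_fun hAmeas
  intro x _
  simp only [smul_eq_mul, hfdef]
  exact (hkey x).symm
end
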